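/- arXiv:1202.4477 — 2 statements merged into one kernel-verified Lean document; each statement's English description precedes it below -/
import Mathlib

section
/- For a quadratic multi-time Hamiltonian H with fundamental vertical metrical d-tensor h_{ab} g^{ij}, the canonical second nonlinear connection component N2^{(a)}_{(i)j} = (h^{ab}/4)[∂g_{ij}/∂x^k · ∂H/∂p_k^b − ∂g_{ij}/∂p_k^b · ∂H/∂x^k + g_{ik} ∂²H/∂x^j∂p_k^b + g_{jk} ∂²H/∂x^i∂p_k^b] equals −Γ^k_{ij} p_k^a + T^{(a)}_{(i)j}, where Γ^k_{ij} are the Christoffel symbols of g_{ij}(t,x) in the x-variables and T^{(a)}_{(i)j} = (h^{ab}/4)(U_{ib•j} + U_{jb•i}) with U_{ib} = g_{ik} U^{(k)}_{(b)} and U_{kb•r} = ∂U_{kb}/∂x^r − U_{sb} Γ^s_{kr}. -/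
/-- Partial derivative in the spatial directions. -/
noncomputable def pdx {n : ℕ} (k : Fin n) (f : (Fin n → ℝ) → ℝ) (x : Fin n → ℝ) : ℝ :=
  fderiv ℝ f x (Pi.single k 1)

/-- Partial derivative with respect to the polymomentum `p_k^b`. -/
noncomputable def pdp {m n : ℕ} (b : Fin m) (k : Fin n)
    (f : (Fin m → Fin n → ℝ) → ℝ) (p : Fin m → Fin n → ℝ) : ℝ :=
  fderiv ℝ f p (Pi.single b (Pi.single k 1))

/-- The generalized spatial Christoffel symbols
`Γ^k_{ij} = (g^{kl}/2)(∂g_{li}/∂x^j + ∂g_{lj}/∂x^i − ∂g_{ij}/∂x^l)`. -/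
noncomputable def christoffel {m n : ℕ}
    (g ginv : (Fin m → ℝ) → (Fin n → ℝ) → Fin n → Fin n → ℝ)
    (t : Fin m → ℝ) (x : Fin n → ℝ) (k i j : Fin n) : ℝ :=
  ∑ l, ginv t x k l / 2 *
    (pdx j (fun y => g t y l i) x + pdx i (fun y => g t y l j) x
      - pdx l (fun y => g t y i j) x)

/-- The lowered potentials `U_{ib} = g_{ik} U^{(k)}_{(b)}`. -/
noncomputable def Ulow {m n : ℕ}
    (g : (Fin m → ℝ) → (Fin n → ℝ) → Fin n → Fin n → ℝ)
    (U : (Fin m → ℝ) → (Fin n → ℝ) → Fin m → Fin n → ℝ)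
    (t : Fin m → ℝ) (x : Fin n → ℝ) (i : Fin n) (b : Fin m) : ℝ :=
  ∑ k, g t x i k * U t x b k

/-- `U_{kb•r} = ∂U_{kb}/∂x^r − U_{sb} Γ^s_{kr}`. -/
noncomputable def Ubullet {m n : ℕ}
    (g ginv : (Fin m → ℝ) → (Fin n → ℝ) → Fin n → Fin n → ℝ)
    (U : (Fin m → ℝ) → (Fin n → ℝ) → Fin m → Fin n → ℝ)
    (t : Fin m → ℝ) (x : Fin n → ℝ) (k : Fin n) (b : Fin m) (r : Fin n) : ℝ :=
  pdx r (fun y => Ulow g U t y k b) x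
    - ∑ s, Ulow g U t x s b * christoffel g ginv t x s k r



private lemma pdx_const {n : ℕ} (k : Fin n) (c : ℝ) (x : Fin n → ℝ) :
    pdx k (fun _ => c) x = 0 := by simp [pdx]

private lemma pdp_const {m n : ℕ} (b : Fin m) (k : Fin n) (c : ℝ) (p : Fin m → Fin n → ℝ) :
    pdp b k (fun _ => c) p = 0 := by simp [pdp]

private lemma pdx_add {n : ℕ} (k : Fin n) {f g : (Fin n → ℝ) → ℝ} {x : Fin n → ℝ}
    (hf : DifferentiableAt ℝ f x) (hg : DifferentiableAt ℝ g x) :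
    pdx k (fun y => f y + g y) x = pdx k f x + pdx k g x := by
  simp [pdx, fderiv_fun_add hf hg]

private lemma pdx_sum {n : ℕ} {ι : Type*} (s : Finset ι) (k : Fin n)
    {f : ι → (Fin n → ℝ) → ℝ} {x : Fin n → ℝ}
    (hf : ∀ i ∈ s, DifferentiableAt ℝ (f i) x) :
    pdx k (fun y => ∑ i ∈ s, f i y) x = ∑ i ∈ s, pdx k (f i) x := by
  simp [pdx, fderiv_fun_sum hf]

private lemma pdx_const_mul {n : ℕ} (k : Fin n) (c : ℝ) {f : (Fin n → ℝ) → ℝ} {x : Fin n → ℝ}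
    (hf : DifferentiableAt ℝ f x) :
    pdx k (fun y => c * f y) x = c * pdx k f x := by
  simp [pdx, fderiv_const_mul hf c]

private lemma pdx_mul {n : ℕ} (k : Fin n) {f g : (Fin n → ℝ) → ℝ} {x : Fin n → ℝ}
    (hf : DifferentiableAt ℝ f x) (hg : DifferentiableAt ℝ g x) :
    pdx k (fun y => f y * g y) x = f x * pdx k g x + g x * pdx k f x := by
  simp [pdx, fderiv_fun_mul hf hg]


private noncomputable def ev {m n : ℕ} (a : Fin m) (i : Fin n) :
    (Fin m → Fin n → ℝ) →L[ℝ] ℝ :=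
  (ContinuousLinearMap.proj i).comp
    (ContinuousLinearMap.proj (R := ℝ) (φ := fun _ : Fin m => Fin n → ℝ) a)

private lemma hev {m n : ℕ} (a : Fin m) (i : Fin n) (p : Fin m → Fin n → ℝ) :
    HasFDerivAt (fun q : Fin m → Fin n → ℝ => q a i) (ev a i) p :=
  (ev a i).hasFDerivAt

private lemma ev_apply {m n : ℕ} (a b : Fin m) (i k : Fin n) :
    ev a i (Pi.single b (Pi.single k 1) : Fin m → Fin n → ℝ)
      = if a = b then (if i = k then (1:ℝ) else 0) else 0 := by
  simp only [ev, ContinuousLinearMap.coe_comp', Function.comp_apply,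
    ContinuousLinearMap.proj_apply, Pi.single_apply]
  split <;> simp [Pi.single_apply]

/-- for a quadratic multi-time Hamiltonian `H` with fundamental
vertical metrical d-tensor `h_{ab} g^{ij}`, the canonical second nonlinear
connection component
`N2^{(a)}_{(i)j} = (h^{ab}/4)[∂g_{ij}/∂x^k ∂H/∂p_k^b − ∂g_{ij}/∂p_k^b ∂H/∂x^k + g_{ik} ∂²H/∂x^j∂p_k^b + g_{jk} ∂²H/∂x^i∂p_k^b]`
equals `−Γ^k_{ij} p_k^a + T^{(a)}_{(i)j}`, where
`T^{(a)}_{(i)j} = (h^{ab}/4)(U_{ib•j} + U_{jb•i})`. -/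
theorem canonical_second_nonlinear_connection
    {m n : ℕ} (hm : 1 ≤ m) (hn : 1 ≤ n)
    (h hinv : (Fin m → ℝ) → Fin m → Fin m → ℝ)
    (g ginv : (Fin m → ℝ) → (Fin n → ℝ) → Fin n → Fin n → ℝ)
    (U : (Fin m → ℝ) → (Fin n → ℝ) → Fin m → Fin n → ℝ)
    (F : (Fin m → ℝ) → (Fin n → ℝ) → ℝ)
    (hsym : ∀ t a b, h t a b = h t b a)
    (hinvsym : ∀ t a b, hinv t a b = hinv t b a)
    (hinverse : ∀ t a c, ∑ b, hinv t a b * h t b c = if a = c then 1 else 0)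
    (hinverse' : ∀ t a c, ∑ b, h t a b * hinv t b c = if a = c then 1 else 0)
    (gsym : ∀ t x i j, g t x i j = g t x j i)
    (ginvsym : ∀ t x i j, ginv t x i j = ginv t x j i)
    (ginverse : ∀ t x i j, ∑ r, ginv t x i r * g t x r j = if i = j then 1 else 0)
    (ginverse' : ∀ t x i j, ∑ r, g t x i r * ginv t x r j = if i = j then 1 else 0)
    (hsmooth : ∀ a b, ContDiff ℝ (⊤ : ℕ∞) (fun t => h t a b))
    (gsmooth : ∀ i j, ContDiff ℝ (⊤ : ℕ∞)
      (fun tx : (Fin m → ℝ) × (Fin n → ℝ) => g tx.1 tx.2 i j))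
    (ginvsmooth : ∀ i j, ContDiff ℝ (⊤ : ℕ∞)
      (fun tx : (Fin m → ℝ) × (Fin n → ℝ) => ginv tx.1 tx.2 i j))
    (Usmooth : ∀ a i, ContDiff ℝ (⊤ : ℕ∞)
      (fun tx : (Fin m → ℝ) × (Fin n → ℝ) => U tx.1 tx.2 a i))
    (Fsmooth : ContDiff ℝ (⊤ : ℕ∞) (fun tx : (Fin m → ℝ) × (Fin n → ℝ) => F tx.1 tx.2))
    (H : (Fin m → ℝ) → (Fin n → ℝ) → (Fin m → Fin n → ℝ) → ℝ)
    (hH : ∀ t x p, H t x p =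
      (∑ a, ∑ b, ∑ i, ∑ j, h t a b * ginv t x i j * p a i * p b j)
      + (∑ a, ∑ i, U t x a i * p a i) + F t x) :
    ∀ (t : Fin m → ℝ) (x : Fin n → ℝ) (p : Fin m → Fin n → ℝ)
      (a : Fin m) (i j : Fin n),
      (∑ b, ∑ k, hinv t a b / 4 *
        (pdx k (fun y => g t y i j) x * pdp b k (fun q => H t x q) p
          - pdp b k (fun _ : Fin m → Fin n → ℝ => g t x i j) p
              * pdx k (fun y => H t y p) x
          + g t x i k * pdx j (fun y => pdp b k (fun q => H t y q) p) x
          + g t x j k * pdx i (fun y => pdp b k (fun q => H t y q) p) x))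
      =
      -(∑ k, christoffel g ginv t x k i j * p a k)
        + ∑ b, hinv t a b / 4 *
            (Ubullet g ginv U t x i b j + Ubullet g ginv U t x j b i) := by
  intro t x p a i j
  -- symmetry of g as functions
  have gswap : ∀ (r s : Fin n), (fun y => g t y r s) = (fun y => g t y s r) :=
    fun r s => funext fun y => gsym t y r s
  -- differentiability in x
  have dgat : ∀ (i' j' : Fin n) (y : Fin n → ℝ),
      DifferentiableAt ℝ (fun y' => g t y' i' j') y := fun i' j' y =>
    (((gsmooth i' j').comp (ContDiff.prodMk (contDiff_const (c := t)) contDiff_id :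
      ContDiff ℝ (⊤ : ℕ∞) (fun y' : Fin n → ℝ => (t, y')))).differentiable
      (by simp)).differentiableAt
  have dginvat : ∀ (i' j' : Fin n) (y : Fin n → ℝ),
      DifferentiableAt ℝ (fun y' => ginv t y' i' j') y := fun i' j' y =>
    (((ginvsmooth i' j').comp (ContDiff.prodMk (contDiff_const (c := t)) contDiff_id :
      ContDiff ℝ (⊤ : ℕ∞) (fun y' : Fin n → ℝ => (t, y')))).differentiable
      (by simp)).differentiableAt
  have dUat : ∀ (b : Fin m) (k : Fin n) (y : Fin n → ℝ),
      DifferentiableAt ℝ (fun y' => U t y' b k) y := fun b k y =>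
    (((Usmooth b k).comp (ContDiff.prodMk (contDiff_const (c := t)) contDiff_id :
      ContDiff ℝ (⊤ : ℕ∞) (fun y' : Fin n → ℝ => (t, y')))).differentiable
      (by simp)).differentiableAt
  -- the momentum derivative of H
  have hpdp : ∀ (y : Fin n → ℝ) (b : Fin m) (k : Fin n),
      pdp b k (fun q => H t y q) p
        = (∑ c, ∑ l, 2 * h t b c * p c l * ginv t y k l) + U t y b k := by
    intro y b k
    have hfun : (fun q => H t y q) = fun q : Fin m → Fin n → ℝ =>
        (∑ a', ∑ b', ∑ i', ∑ j', h t a' b' * ginv t y i' j' * q a' i' * q b' j')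
        + ((∑ a', ∑ i', U t y a' i' * q a' i') + F t y) := by
      funext q; rw [hH]; ring
    have hQ : HasFDerivAt
        (fun q : Fin m → Fin n → ℝ =>
          ∑ a', ∑ b', ∑ i', ∑ j', h t a' b' * ginv t y i' j' * q a' i' * q b' j')
        (∑ a', ∑ b', ∑ i', ∑ j',
          ((h t a' b' * ginv t y i' j' * p a' i') • ev b' j'
            + p b' j' • ((h t a' b' * ginv t y i' j') • ev a' i'))) p := by
      apply HasFDerivAt.fun_sum; intro a' _
      apply HasFDerivAt.fun_sum; intro b' _
      apply HasFDerivAt.fun_sum; intro i' _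
      apply HasFDerivAt.fun_sum; intro j' _
      exact ((hev a' i' p).const_mul (h t a' b' * ginv t y i' j')).fun_mul (hev b' j' p)
    have hL : HasFDerivAt
        (fun q : Fin m → Fin n → ℝ => (∑ a', ∑ i', U t y a' i' * q a' i') + F t y)
        (∑ a', ∑ i', U t y a' i' • ev a' i') p := by
      apply HasFDerivAt.add_const
      apply HasFDerivAt.fun_sum; intro a' _
      apply HasFDerivAt.fun_sum; intro i' _
      exact (hev a' i' p).const_mul (U t y a' i')
    have hD := hQ.fun_add hL
    rw [pdp, hfun, hD.fderiv]
    simp only [ContinuousLinearMap.add_apply, ContinuousLinearMap.coe_sum',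
      Finset.sum_apply, ContinuousLinearMap.smul_apply, ev_apply, smul_eq_mul]
    simp only [mul_ite, mul_one, mul_zero, Finset.sum_ite_irrel, Finset.sum_const_zero,
      Finset.sum_ite_eq', Finset.mem_univ, if_true, Finset.sum_add_distrib]
    congr 1
    rw [← Finset.sum_add_distrib]
    apply Finset.sum_congr rfl; intro c _
    rw [← Finset.sum_add_distrib]
    apply Finset.sum_congr rfl; intro l _
    rw [hsym t c b, ginvsym t y l k]; ring
  -- the mixed second derivative
  have hpdx2 : ∀ (b : Fin m) (k r : Fin n),
      pdx r (fun y => (∑ c, ∑ l, 2 * h t b c * p c l * ginv t y k l) + U t y b k) x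
        = (∑ c, ∑ l, 2 * h t b c * p c l * pdx r (fun y => ginv t y k l) x)
          + pdx r (fun y => U t y b k) x := by
    intro b k r
    have d1 : DifferentiableAt ℝ (fun y => ∑ c, ∑ l, 2 * h t b c * p c l * ginv t y k l) x :=
      DifferentiableAt.fun_sum fun c _ =>
        DifferentiableAt.fun_sum fun l _ => (dginvat k l x).const_mul _
    rw [pdx_add r d1 (dUat b k x)]
    congr 1
    rw [pdx_sum _ r (fun c _ =>
      (DifferentiableAt.fun_sum fun l _ => (dginvat k l x).const_mul _ :
        DifferentiableAt ℝ (fun y => ∑ l, 2 * h t b c * p c l * ginv t y k l) x))]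
    refine Finset.sum_congr rfl fun c _ => ?_
    rw [pdx_sum _ r (fun l _ => (dginvat k l x).const_mul _)]
    exact Finset.sum_congr rfl fun l _ => pdx_const_mul r _ (dginvat k l x)
  -- derivative of the inverse metric identity
  have dinv : ∀ (r l' i' : Fin n),
      ∑ k', g t x i' k' * pdx r (fun y => ginv t y k' l') x
        = -∑ k', pdx r (fun y => g t y i' k') x * ginv t x k' l' := by
    intro r l' i'
    have h0 : pdx r (fun y => ∑ k', g t y i' k' * ginv t y k' l') x = 0 := by
      have e : (fun y => ∑ k', g t y i' k' * ginv t y k' l')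
          = fun _ : Fin n → ℝ => if i' = l' then (1:ℝ) else 0 :=
        funext fun y => ginverse' t y i' l'
      rw [e, pdx_const]
    rw [pdx_sum _ r (fun k' _ => (dgat i' k' x).fun_mul (dginvat k' l' x))] at h0
    have h1 : ∀ k' : Fin n, pdx r (fun y => g t y i' k' * ginv t y k' l') x
        = g t x i' k' * pdx r (fun y => ginv t y k' l') x
          + ginv t x k' l' * pdx r (fun y => g t y i' k') x :=
      fun k' => pdx_mul r (dgat i' k' x) (dginvat k' l' x)
    simp only [h1, Finset.sum_add_distrib] at h0
    have h2 : ∑ k', ginv t x k' l' * pdx r (fun y => g t y i' k') x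
        = ∑ k', pdx r (fun y => g t y i' k') x * ginv t x k' l' :=
      Finset.sum_congr rfl fun k' _ => mul_comm _ _
    rw [h2] at h0
    linarith
  -- generic collapsing of the quadratic sums
  have grp : ∀ (E : Fin n → ℝ) (M : Fin n → Fin n → ℝ) (V : Fin m → Fin n → ℝ),
      (∑ b, ∑ k, hinv t a b / 4 *
          (E k * ((∑ c, ∑ l, 2 * h t b c * p c l * M k l) + V b k)))
        = (∑ k, ∑ l, E k * M k l * p a l / 2)
          + ∑ b, hinv t a b / 4 * ∑ k, E k * V b k := by
    intro E M V
    have e1 : ∀ (b : Fin m) (k : Fin n), hinv t a b / 4 *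
          (E k * ((∑ c, ∑ l, 2 * h t b c * p c l * M k l) + V b k))
        = (∑ c, ∑ l, hinv t a b * h t b c * (E k * M k l * p c l / 2))
          + hinv t a b / 4 * (E k * V b k) := by
      intro b k
      have e2 : hinv t a b / 4 *
            (E k * ((∑ c, ∑ l, 2 * h t b c * p c l * M k l) + V b k))
          = (hinv t a b / 4 * E k) * (∑ c, ∑ l, 2 * h t b c * p c l * M k l)
            + hinv t a b / 4 * (E k * V b k) := by ring
      rw [e2, Finset.mul_sum]
      congr 1
      refine Finset.sum_congr rfl fun c _ => ?_
      rw [Finset.mul_sum]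
      exact Finset.sum_congr rfl fun l _ => by ring
    simp only [e1, Finset.sum_add_distrib]
    congr 1
    · rw [Finset.sum_comm]
      refine Finset.sum_congr rfl fun k _ => ?_
      have swap1 : ∀ b : Fin m,
          (∑ c, ∑ l, hinv t a b * h t b c * (E k * M k l * p c l / 2))
            = ∑ l, ∑ c, hinv t a b * h t b c * (E k * M k l * p c l / 2) :=
        fun b => Finset.sum_comm
      simp only [swap1]
      rw [Finset.sum_comm]
      refine Finset.sum_congr rfl fun l _ => ?_
      rw [Finset.sum_comm]
      have e3 : ∀ c : Fin m, ∑ b, hinv t a b * h t b c * (E k * M k l * p c l / 2)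
          = (∑ b, hinv t a b * h t b c) * (E k * M k l * p c l / 2) :=
        fun c => by rw [Finset.sum_mul]
      simp only [e3, hinverse, ite_mul, one_mul, zero_mul, Finset.sum_ite_eq,
        Finset.mem_univ, if_true]
    · refine Finset.sum_congr rfl fun b _ => ?_
      rw [Finset.mul_sum]
  -- combined expansion of the full left-hand side
  have expand : ∀ (E1 E2 E3 : Fin n → ℝ) (M1 M2 M3 : Fin n → Fin n → ℝ)
      (V1 V2 V3 : Fin m → Fin n → ℝ),
      (∑ b, ∑ k, hinv t a b / 4 *
          (E1 k * ((∑ c, ∑ l, 2 * h t b c * p c l * M1 k l) + V1 b k)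
            + E2 k * ((∑ c, ∑ l, 2 * h t b c * p c l * M2 k l) + V2 b k)
            + E3 k * ((∑ c, ∑ l, 2 * h t b c * p c l * M3 k l) + V3 b k)))
        = (∑ k, ∑ l, (E1 k * M1 k l + E2 k * M2 k l + E3 k * M3 k l) * p a l / 2)
          + ∑ b, hinv t a b / 4 *
              ∑ k, (E1 k * V1 b k + E2 k * V2 b k + E3 k * V3 b k) := by
    intro E1 E2 E3 M1 M2 M3 V1 V2 V3
    have e0 : ∀ (b : Fin m) (k : Fin n), hinv t a b / 4 *
          (E1 k * ((∑ c, ∑ l, 2 * h t b c * p c l * M1 k l) + V1 b k)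
            + E2 k * ((∑ c, ∑ l, 2 * h t b c * p c l * M2 k l) + V2 b k)
            + E3 k * ((∑ c, ∑ l, 2 * h t b c * p c l * M3 k l) + V3 b k))
        = hinv t a b / 4 * (E1 k * ((∑ c, ∑ l, 2 * h t b c * p c l * M1 k l) + V1 b k))
          + hinv t a b / 4 * (E2 k * ((∑ c, ∑ l, 2 * h t b c * p c l * M2 k l) + V2 b k))
          + hinv t a b / 4 * (E3 k * ((∑ c, ∑ l, 2 * h t b c * p c l * M3 k l) + V3 b k)) := by
      intro b k; ring
    have q : ∑ k, ∑ l, (E1 k * M1 k l + E2 k * M2 k l + E3 k * M3 k l) * p a l / 2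
        = (∑ k, ∑ l, E1 k * M1 k l * p a l / 2) + (∑ k, ∑ l, E2 k * M2 k l * p a l / 2)
          + ∑ k, ∑ l, E3 k * M3 k l * p a l / 2 := by
      simp only [add_mul, add_div, Finset.sum_add_distrib]
    have w : ∑ b, hinv t a b / 4 * ∑ k, (E1 k * V1 b k + E2 k * V2 b k + E3 k * V3 b k)
        = (∑ b, hinv t a b / 4 * ∑ k, E1 k * V1 b k)
          + (∑ b, hinv t a b / 4 * ∑ k, E2 k * V2 b k)
          + ∑ b, hinv t a b / 4 * ∑ k, E3 k * V3 b k := by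
      simp only [Finset.sum_add_distrib, mul_add]
    rw [q, w]
    simp only [e0, Finset.sum_add_distrib]
    rw [grp E1 M1 V1, grp E2 M2 V2, grp E3 M3 V3]
    ring
  -- the quadratic part gives the Christoffel symbols
  have quadid : ∀ l : Fin n,
      ∑ k, (pdx k (fun y => g t y i j) x * ginv t x k l
          + g t x i k * pdx j (fun y => ginv t y k l) x
          + g t x j k * pdx i (fun y => ginv t y k l) x) / 2
        = -christoffel g ginv t x l i j := by
    intro l
    have hA : ∑ k, (pdx k (fun y => g t y i j) x * ginv t x k l
          + g t x i k * pdx j (fun y => ginv t y k l) x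
          + g t x j k * pdx i (fun y => ginv t y k l) x) / 2
        = ((∑ k, pdx k (fun y => g t y i j) x * ginv t x k l)
            + (∑ k, g t x i k * pdx j (fun y => ginv t y k l) x)
            + ∑ k, g t x j k * pdx i (fun y => ginv t y k l) x) / 2 := by
      simp only [add_div, Finset.sum_add_distrib, Finset.sum_div]
    rw [hA, dinv j l i, dinv i l j]
    have comb : ((∑ k, pdx k (fun y => g t y i j) x * ginv t x k l)
          + -∑ k, pdx j (fun y => g t y i k) x * ginv t x k l
          + -∑ k, pdx i (fun y => g t y j k) x * ginv t x k l) / 2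
        = ∑ k, (pdx k (fun y => g t y i j) x * ginv t x k l
            - pdx j (fun y => g t y i k) x * ginv t x k l
            - pdx i (fun y => g t y j k) x * ginv t x k l) / 2 := by
      rw [← Finset.sum_div, Finset.sum_sub_distrib, Finset.sum_sub_distrib]
      ring
    rw [comb]
    simp only [christoffel]
    rw [← Finset.sum_neg_distrib]
    refine Finset.sum_congr rfl fun k _ => ?_
    rw [gswap k i, gswap k j, ginvsym t x l k]
    ring
  -- the potential part gives the Ubullet terms
  have Uid : ∀ b : Fin m,
      ∑ k, (pdx k (fun y => g t y i j) x * U t x b k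
          + g t x i k * pdx j (fun y => U t y b k) x
          + g t x j k * pdx i (fun y => U t y b k) x)
        = Ubullet g ginv U t x i b j + Ubullet g ginv U t x j b i := by
    intro b
    have dUlow : ∀ (r i' : Fin n), pdx r (fun y => Ulow g U t y i' b) x
        = ∑ k, (pdx r (fun y => g t y i' k) x * U t x b k
            + g t x i' k * pdx r (fun y => U t y b k) x) := by
      intro r i'
      have e : (fun y => Ulow g U t y i' b)
          = fun y => ∑ k, g t y i' k * U t y b k := rfl
      rw [e, pdx_sum _ r (fun k _ => (dgat i' k x).fun_mul (dUat b k x))]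
      refine Finset.sum_congr rfl fun k _ => ?_
      rw [pdx_mul r (dgat i' k x) (dUat b k x)]
      ring
    have hcol : ∀ k r : Fin n, ∑ s, g t x s k * ginv t x s r
        = if k = r then (1:ℝ) else 0 := by
      intro k r
      rw [← ginverse' t x k r]
      refine Finset.sum_congr rfl fun s _ => ?_
      rw [gsym t x s k, ginvsym t x s r]
    have gam : ∀ (i' j' : Fin n),
        ∑ s, Ulow g U t x s b * christoffel g ginv t x s i' j'
          = ∑ k, U t x b k * ((pdx j' (fun y => g t y k i') x
              + pdx i' (fun y => g t y k j') x
              - pdx k (fun y => g t y i' j') x) / 2) := by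
      intro i' j'
      simp only [Ulow, christoffel]
      have e4 : ∀ s : Fin n, (∑ k, g t x s k * U t x b k) *
            (∑ r, ginv t x s r / 2 * (pdx j' (fun y => g t y r i') x
              + pdx i' (fun y => g t y r j') x - pdx r (fun y => g t y i' j') x))
          = ∑ k, ∑ r, (g t x s k * ginv t x s r) *
              (U t x b k * (pdx j' (fun y => g t y r i') x
                + pdx i' (fun y => g t y r j') x - pdx r (fun y => g t y i' j') x) / 2) := by
        intro s
        rw [Finset.sum_mul_sum]
        refine Finset.sum_congr rfl fun k _ => Finset.sum_congr rfl fun r _ => by ring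
      simp only [e4]
      rw [Finset.sum_comm]
      refine Finset.sum_congr rfl fun k _ => ?_
      rw [Finset.sum_comm]
      have e5 : ∀ r : Fin n, ∑ s, (g t x s k * ginv t x s r) *
            (U t x b k * (pdx j' (fun y => g t y r i') x
              + pdx i' (fun y => g t y r j') x - pdx r (fun y => g t y i' j') x) / 2)
          = (∑ s, g t x s k * ginv t x s r) *
            (U t x b k * (pdx j' (fun y => g t y r i') x
              + pdx i' (fun y => g t y r j') x - pdx r (fun y => g t y i' j') x) / 2) :=
        fun r => by rw [Finset.sum_mul]
      simp only [e5, hcol, ite_mul, one_mul, zero_mul, Finset.sum_ite_eq,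
        Finset.mem_univ, if_true]
      ring
    simp only [Ubullet]
    rw [dUlow j i, dUlow i j, gam i j, gam j i]
    rw [← Finset.sum_sub_distrib, ← Finset.sum_sub_distrib, ← Finset.sum_add_distrib]
    refine Finset.sum_congr rfl fun k _ => ?_
    rw [gswap k i, gswap k j, gswap j i]
    ring
  -- now assemble everything
  simp only [hpdp, pdp_const, zero_mul, sub_zero, hpdx2]
  refine Eq.trans (expand (fun k => pdx k (fun y => g t y i j) x)
    (fun k => g t x i k) (fun k => g t x j k)
    (fun k l => ginv t x k l) (fun k l => pdx j (fun y => ginv t y k l) x)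
    (fun k l => pdx i (fun y => ginv t y k l) x)
    (fun b k => U t x b k) (fun b k => pdx j (fun y => U t y b k) x)
    (fun b k => pdx i (fun y => U t y b k) x)) ?_
  congr 1
  · rw [Finset.sum_comm, ← Finset.sum_neg_distrib]
    refine Finset.sum_congr rfl fun l _ => ?_
    have e6 : ∑ k, (pdx k (fun y => g t y i j) x * ginv t x k l
          + g t x i k * pdx j (fun y => ginv t y k l) x
          + g t x j k * pdx i (fun y => ginv t y k l) x) * p a l / 2
        = (∑ k, (pdx k (fun y => g t y i j) x * ginv t x k l
            + g t x i k * pdx j (fun y => ginv t y k l) x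
            + g t x j k * pdx i (fun y => ginv t y k l) x) / 2) * p a l := by
      rw [Finset.sum_mul]
      exact Finset.sum_congr rfl fun k _ => by ring
    rw [e6, quadid l]
    ring
  · refine Finset.sum_congr rfl fun b _ => ?_
    rw [Uid b]
end

section
/- Second geometrical Maxwell-like equation: if Δ^{(i)}_{(a)j|k} − Δ^{(i)}_{(a)k|j} = −p^{(r)}_{(a)} R^i_{rjk} − ϑ^{(i)(r)}_{(a)(f)} R^{(f)}_{(r)jk} for all i,j,k, and F^{(i)}_{(a)j} = (1/2)(Δ^{(i)}_{(a)j} − Δ^{(j)}_{(a)i}), and the covariant derivative |k is linear, then the cyclic sum Σ_{{i,j,k}} F^{(i)}_{(a)j|k} = −(1/2) Σ_{{i,j,k}} [ϑ^{(i)(r)}_{(a)(f)} R^{(f)}_{(r)jk} + R^i_{rjk} p^{(r)}_{(a)}], provided the curvature satisfies the first Bianchi-type cyclic identity in its appearance (R^i_{rjk} antisymmetric in j,k and R^{(f)}_{(r)jk} antisymmetric in j,k). -/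
/-- second geometrical Maxwell-like equation: if
`Δ^{(i)}_{(a)j|k} − Δ^{(i)}_{(a)k|j} = −p^{(r)}_{(a)} R^i_{rjk} − ϑ^{(i)(r)}_{(a)(f)} R^{(f)}_{(r)jk}`
for all `i,j,k`, and `F^{(i)}_{(a)j} = (1/2)(Δ^{(i)}_{(a)j} − Δ^{(j)}_{(a)i})`,
and the covariant derivative `|k` is linear, then the cyclic sum satisfies
`Σ_{{i,j,k}} F^{(i)}_{(a)j|k} = −(1/2) Σ_{{i,j,k}} [ϑ^{(i)(r)}_{(a)(f)} R^{(f)}_{(r)jk} + R^i_{rjk} p^{(r)}_{(a)}]`,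
provided the curvatures `R^i_{rjk}` and `R^{(f)}_{(r)jk}` are antisymmetric in `(j,k)`. -/
theorem second_maxwell_like_equation
    {m n : ℕ} {X : Type*}
    (Δ : Fin n → Fin m → Fin n → X → ℝ)
    (θ : Fin n → Fin n → Fin m → Fin m → X → ℝ)
    (p : Fin n → Fin m → X → ℝ)
    (Rc : Fin n → Fin n → Fin n → Fin n → X → ℝ)
    (Rv : Fin m → Fin n → Fin n → Fin n → X → ℝ)
    (D : Fin n → (X → ℝ) →ₗ[ℝ] (X → ℝ))
    (hRcanti : ∀ i r j k, Rc i r j k = -Rc i r k j)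
    (hRvanti : ∀ f r j k, Rv f r j k = -Rv f r k j)
    (hdefl : ∀ i a j k,
      D k (Δ i a j) - D j (Δ i a k)
        = -(∑ r, p r a * Rc i r j k) - ∑ r, ∑ f, θ i r a f * Rv f r j k) :
    ∀ a i j k,
      D k ((1 / 2 : ℝ) • (Δ i a j - Δ j a i))
        + D i ((1 / 2 : ℝ) • (Δ j a k - Δ k a j))
        + D j ((1 / 2 : ℝ) • (Δ k a i - Δ i a k))
      = -((1 / 2 : ℝ) •
          (((∑ r, ∑ f, θ i r a f * Rv f r j k) + ∑ r, Rc i r j k * p r a)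
            + ((∑ r, ∑ f, θ j r a f * Rv f r k i) + ∑ r, Rc j r k i * p r a)
            + ((∑ r, ∑ f, θ k r a f * Rv f r i j) + ∑ r, Rc k r i j * p r a))) := by
  intro a i j k
  funext x
  have h1 := congrFun (hdefl i a j k) x
  have h2 := congrFun (hdefl j a k i) x
  have h3 := congrFun (hdefl k a i j) x
  simp only [map_smul, map_sub, Pi.smul_apply, Pi.sub_apply, Pi.add_apply, Pi.neg_apply,
    Pi.mul_apply, Finset.sum_apply, smul_eq_mul] at h1 h2 h3 ⊢
  have hc : ∀ i' j' k' : Fin n, ∑ r, p r a x * Rc i' r j' k' x = ∑ r, Rc i' r j' k' x * p r a x := by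
    intro i' j' k'; exact Finset.sum_congr rfl fun r _ => mul_comm _ _
  linear_combination (1/2 : ℝ) * h1 + (1/2 : ℝ) * h2 + (1/2 : ℝ) * h3
    - (1/2 : ℝ) * hc i j k - (1/2 : ℝ) * hc j k i - (1/2 : ℝ) * hc k i j
end
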